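/- arXiv:2507.23517 — 4 statements merged into one kernel-verified Lean document; each statement's English description precedes it below -/
import Mathlib

section
/- Let G be a finite connected bridgeless graph (parallel edges allowed) with diameter d and maximum edge girth g*(G)=3, i.e. every edge of G either has a parallel edge or lies in a triangle. Then G admits a strong orientation whose diameter is at most 3d. -/
/-- A multigraph: vertices `V`, edges `E`, each edge has two distinct endpoints. -/
structure Multigraph (V : Type*) (E : Type*) where
  ends : E → Sym2 V
  loopless : ∀ e, ¬ (ends e).IsDiag

namespace Multigraph

variable {V E : Type*}

/-- Adjacency in a multigraph: some edge joins `x` and `y`. -/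
def Adjm (G : Multigraph V E) (x y : V) : Prop := ∃ e, G.ends e = s(x, y)

/-- The underlying simple graph of a multigraph. -/
def toSimple (G : Multigraph V E) : SimpleGraph V where
  Adj x y := x ≠ y ∧ G.Adjm x y
  symm := by
    constructor
    rintro x y ⟨hne, e, he⟩
    exact ⟨hne.symm, e, he.trans (Sym2.eq_swap)⟩
  loopless := by constructor; rintro x ⟨hne, -⟩; exact hne rfl

/-- Distance between two vertices (length of a shortest path). -/
noncomputable def dist (G : Multigraph V E) (x y : V) : ℕ := G.toSimple.dist x y

/-- The diameter of a multigraph. -/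
noncomputable def diam (G : Multigraph V E) : ℕ := sSup {n | ∃ x y, G.dist x y = n}

/-- The multigraph obtained by deleting the edge `e₀`. -/
def deleteEdge (G : Multigraph V E) (e₀ : E) : Multigraph V {e : E // e ≠ e₀} where
  ends e := G.ends e.1
  loopless e := G.loopless e.1

/-- A (connected) multigraph is bridgeless if deleting any single edge leaves it connected. -/
def Bridgeless (G : Multigraph V E) : Prop :=
  ∀ e : E, ((G.deleteEdge e).toSimple).Connected

/-- Walks in a multigraph, recording the edges used. -/
inductive Walk (G : Multigraph V E) : V → V → Type _
  | nil {v : V} : Walk G v v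
  | cons {x y z : V} (e : E) (he : G.ends e = s(x, y)) (p : Walk G y z) : Walk G x z

namespace Walk

variable {G : Multigraph V E}

/-- The length (number of edges) of a walk. -/
def length : ∀ {x y : V}, G.Walk x y → ℕ
  | _, _, .nil => 0
  | _, _, .cons _ _ p => p.length + 1

/-- The list of edges of a walk. -/
def edges : ∀ {x y : V}, G.Walk x y → List E
  | _, _, .nil => []
  | _, _, .cons e _ p => e :: p.edges

/-- The list of vertices of a walk. -/
def support : ∀ {x y : V}, G.Walk x y → List V
  | x, _, .nil => [x]
  | x, _, .cons _ _ p => x :: p.support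

/-- A closed walk is a cycle if its edges are distinct and its vertices
(other than the repeated base point) are distinct. -/
def IsCycle {v : V} (p : G.Walk v v) : Prop :=
  p.edges.Nodup ∧ p.support.tail.Nodup ∧ 0 < p.length

end Walk

/-- The edge girth of `e`: the length of a shortest cycle containing `e`. -/
noncomputable def edgeGirth (G : Multigraph V E) (e : E) : ℕ :=
  sInf {n | ∃ (v : V) (p : G.Walk v v), p.IsCycle ∧ e ∈ p.edges ∧ p.length = n}

/-- The maximum edge girth `g*(G)`. -/
noncomputable def maxEdgeGirth (G : Multigraph V E) : ℕ :=
  sSup (Set.range fun e => G.edgeGirth e)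

/-- An orientation of a multigraph: each edge is assigned a direction. -/
structure Orientation (G : Multigraph V E) where
  dir : E → V × V
  compat : ∀ e, s((dir e).1, (dir e).2) = G.ends e

/-- Arcs of an orientation. -/
def Orientation.DAdj {G : Multigraph V E} (o : G.Orientation) (x y : V) : Prop :=
  ∃ e, o.dir e = (x, y)

/-- Directed distance in an orientation (`⊤` if unreachable). -/
noncomputable def Orientation.ddist {G : Multigraph V E} (o : G.Orientation) (x y : V) : ℕ∞ :=
  sInf {n : ℕ∞ | ∃ l : List V, List.Chain o.DAdj x l ∧
    (x :: l).getLast (List.cons_ne_nil x l) = y ∧ (l.length : ℕ∞) = n}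

/-- An orientation is strong if every vertex is reachable from every vertex by a directed path. -/
def Orientation.IsStrong {G : Multigraph V E} (o : G.Orientation) : Prop :=
  ∀ x y : V, o.ddist x y ≠ ⊤

/-- The diameter of an orientation. -/
noncomputable def Orientation.odiam {G : Multigraph V E} (o : G.Orientation) : ℕ∞ :=
  ⨆ (x : V) (y : V), o.ddist x y

end Multigraph

/-!
Because `G` is bridgeless, every edge lies on a cycle, and `g*(G) = 3` makes every edge parallel
to another one or part of a triangle. Orient a maximal family `D` of edge-disjoint digons and
triangles cyclically: every arc of `D` is then reversed by a directed path of length at most 2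
inside `D`, and by maximality every other edge is parallel to an edge of `D` or forms a triangle
with one. Such an edge (together with the third edge of its triangle) can be oriented so that its
arcs are reversed by directed paths of length at most 3, using that the edge of `D` can be
traversed in both directions within 2 steps. Once all edges are processed, each undirected step
of a shortest path is replaced by a directed path of length at most 3.
-/

namespace Relation

variable {α : Type*} {r s : α → α → Prop}

inductive ChainWithin (r : α → α → Prop) : ℕ → α → α → Prop
  | refl (n : ℕ) (a : α) : ChainWithin r n a a
  | cons {n : ℕ} {a b c : α} : r a b → ChainWithin r n b c → ChainWithin r (n + 1) a c

namespace ChainWithin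

lemma single {n : ℕ} {a b : α} (h : r a b) : ChainWithin r (n + 1) a b :=
  .cons h (.refl n b)

lemma mono {m n : ℕ} {a b : α} (h : ChainWithin r m a b) (hmn : m ≤ n) :
    ChainWithin r n a b := by
  induction h generalizing n with
  | refl => exact .refl n _
  | cons hab _ ih =>
    obtain ⟨k, rfl⟩ := Nat.exists_eq_succ_of_ne_zero (by omega : n ≠ 0)
    exact .cons hab (ih (by omega))

lemma mono_rel {n : ℕ} {a b : α} (h : ChainWithin r n a b) (hrs : ∀ x y, r x y → s x y) :
    ChainWithin s n a b := by
  induction h with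
  | refl n a => exact .refl n a
  | cons hab _ ih => exact .cons (hrs _ _ hab) ih

lemma trans {m n : ℕ} {a b c : α} (h₁ : ChainWithin r m a b) (h₂ : ChainWithin r n b c) :
    ChainWithin r (m + n) a c := by
  induction h₁ with
  | refl m a => exact h₂.mono (by omega)
  | cons hab _ ih => rw [Nat.add_right_comm]; exact .cons hab (ih h₂)

lemma of_walk {H : SimpleGraph α} {n : ℕ} (hadj : ∀ x y, H.Adj x y → ChainWithin r n x y)
    {a b : α} (p : H.Walk a b) : ChainWithin r (p.length * n) a b := by
  induction p with
  | nil => exact .refl _ _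
  | cons h _ ih =>
    rw [SimpleGraph.Walk.length_cons, Nat.succ_mul, Nat.add_comm]
    exact (hadj _ _ h).trans ih

end ChainWithin

end Relation

namespace Multigraph

open Relation

variable {V E : Type*} {G : Multigraph V E}

lemma dist_le_diam [Finite V] (G : Multigraph V E) (x y : V) : G.dist x y ≤ G.diam := by
  refine le_csSup (Set.Finite.bddAbove ?_) ⟨x, y, rfl⟩
  refine (Set.finite_range fun p : V × V => G.dist p.1 p.2).subset ?_
  rintro _ ⟨x, y, rfl⟩
  exact ⟨(x, y), rfl⟩

lemma edgeGirth_le_maxEdgeGirth [Finite E] (G : Multigraph V E) (e : E) :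
    G.edgeGirth e ≤ G.maxEdgeGirth :=
  le_csSup (Set.finite_range _).bddAbove ⟨e, rfl⟩

def IsTriangle (G : Multigraph V E) (e f g : E) (a b c : V) : Prop :=
  e ≠ f ∧ e ≠ g ∧ f ≠ g ∧ G.ends e = s(a, b) ∧ G.ends f = s(b, c) ∧ G.ends g = s(c, a)

lemma IsTriangle.swap {e f g : E} {a b c : V} (h : G.IsTriangle e f g a b c) :
    G.IsTriangle e g f b a c := by
  obtain ⟨hef, heg, hfg, he, hf, hg⟩ := h
  exact ⟨heg, hef, hfg.symm, he.trans Sym2.eq_swap, hg.trans Sym2.eq_swap,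
    hf.trans Sym2.eq_swap⟩

def HasShortCycle (G : Multigraph V E) (e : E) : Prop :=
  (∃ e', e' ≠ e ∧ G.ends e' = G.ends e) ∨ ∃ f g a b c, G.IsTriangle e f g a b c

lemma Walk.IsCycle.hasShortCycle {v : V} {p : G.Walk v v} (hp : p.IsCycle) {e : E}
    (he : e ∈ p.edges) (hlen : p.length ≤ 3) : G.HasShortCycle e := by
  obtain ⟨hnodup, -, hpos⟩ := hp
  rcases p with _ | ⟨e₁, h₁, _ | ⟨e₂, h₂, _ | ⟨e₃, h₃, _ | ⟨e₄, h₄, q⟩⟩⟩⟩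
  · simp [Walk.length] at hpos
  · exact absurd (h₁ ▸ Sym2.mk_isDiag_iff.2 rfl) (G.loopless e₁)
  · simp only [Walk.edges, List.nodup_cons, List.mem_cons, List.not_mem_nil, or_false]
      at hnodup he
    rcases he with rfl | rfl
    · exact Or.inl ⟨e₂, Ne.symm hnodup.1, h₂.trans (h₁.trans Sym2.eq_swap).symm⟩
    · exact Or.inl ⟨e₁, hnodup.1, h₁.trans (h₂.trans Sym2.eq_swap).symm⟩
  · simp only [Walk.edges, List.nodup_cons, List.mem_cons, List.not_mem_nil, or_false,
      not_or] at hnodup he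
    obtain ⟨⟨h₁₂, h₁₃⟩, h₂₃, -⟩ := hnodup
    rcases he with rfl | rfl | rfl
    · exact Or.inr ⟨e₂, e₃, _, _, _, h₁₂, h₁₃, h₂₃, h₁, h₂, h₃⟩
    · exact Or.inr ⟨e₃, e₁, _, _, _, h₂₃, Ne.symm h₁₂, Ne.symm h₁₃, h₂, h₃, h₁⟩
    · exact Or.inr ⟨e₁, e₂, _, _, _, Ne.symm h₁₃, Ne.symm h₂₃, h₁₂, h₃, h₁, h₂⟩
  · simp only [Walk.length] at hlen
    omega

lemma exists_walk_of_deleteEdge {e : E} {u w : V} (W : (G.deleteEdge e).toSimple.Walk u w) :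
    ∃ q : G.Walk u w, q.support = W.support ∧ q.edges.map G.ends = W.edges ∧ e ∉ q.edges := by
  induction W with
  | nil => exact ⟨Walk.nil, rfl, rfl, List.not_mem_nil⟩
  | cons h _ ih =>
    obtain ⟨-, f, hf⟩ := h
    obtain ⟨q, hsupp, hedges, hq⟩ := ih
    refine ⟨Walk.cons f.1 hf q, ?_, ?_, ?_⟩
    · simp only [Walk.support, hsupp]
      rfl
    · simp only [Walk.edges, List.map_cons, hedges]
      exact congrArg (· :: _) hf
    · simpa [Walk.edges, hq] using Ne.symm f.2

lemma Bridgeless.exists_isCycle (hG : G.Bridgeless) (e : E) :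
    ∃ (v : V) (p : G.Walk v v), p.IsCycle ∧ e ∈ p.edges := by
  classical
  obtain ⟨x, y, hxy⟩ : ∃ x y, G.ends e = s(x, y) := Sym2.exists.1 ⟨_, rfl⟩
  obtain ⟨W⟩ := (hG e).preconnected y x
  have hW := W.bypass_isPath
  obtain ⟨q, hsupp, hedges, hq⟩ := exists_walk_of_deleteEdge W.bypass
  refine ⟨x, .cons e hxy q, ⟨?_, ?_, Nat.succ_pos _⟩, List.mem_cons_self⟩
  · have : q.edges.Nodup := by
      have := hW.isTrail.edges_nodup
      rw [← hedges] at this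
      exact this.of_map _
    exact List.nodup_cons.2 ⟨hq, this⟩
  · simpa only [Walk.support, List.tail_cons, hsupp] using hW.support_nodup

lemma Bridgeless.hasShortCycle [Finite E] (hG : G.Bridgeless) (hg : G.maxEdgeGirth = 3)
    (e : E) : G.HasShortCycle e := by
  obtain ⟨v, p, hp, he⟩ := hG.exists_isCycle e
  obtain ⟨w, q, hq, heq, hlen⟩ := Nat.sInf_mem (s := {n | ∃ (v : V) (p : G.Walk v v),
    p.IsCycle ∧ e ∈ p.edges ∧ p.length = n}) ⟨_, v, p, hp, he, rfl⟩
  refine hq.hasShortCycle heq ?_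
  have := G.edgeGirth_le_maxEdgeGirth e
  rw [hg] at this
  exact hlen ▸ this

namespace Orientation

instance : Nonempty G.Orientation :=
  ⟨⟨fun e => (G.ends e).out, fun e => Quot.out_eq (G.ends e)⟩⟩

variable {o o' : G.Orientation} {D S T : Finset E} {m n : ℕ} {x y : V}

lemma dir_eq_or_eq_swap (o : G.Orientation) {e : E} (h : G.ends e = s(x, y)) :
    o.dir e = (x, y) ∨ o.dir e = (y, x) := by
  rcases Sym2.eq_iff.1 ((o.compat e).trans h) with ⟨h₁, h₂⟩ | ⟨h₁, h₂⟩
  · exact Or.inl (Prod.ext h₁ h₂)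
  · exact Or.inr (Prod.ext h₁ h₂)

section Reorient

variable [DecidableEq E]

def reorient (o : G.Orientation) (e : E) (x y : V) (h : G.ends e = s(x, y)) : G.Orientation where
  dir := Function.update o.dir e (x, y)
  compat f := by
    rcases eq_or_ne f e with rfl | hf
    · simp [h]
    · simp [hf, o.compat f]

@[simp]
lemma reorient_dir_self (o : G.Orientation) {e : E} (h : G.ends e = s(x, y)) :
    (o.reorient e x y h).dir e = (x, y) :=
  Function.update_self ..

lemma reorient_dir_of_ne (o : G.Orientation) {e f : E} (h : G.ends e = s(x, y)) (hf : f ≠ e) :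
    (o.reorient e x y h).dir f = o.dir f :=
  Function.update_of_ne hf ..

end Reorient

def ArcIn (o : G.Orientation) (S : Finset E) (x y : V) : Prop := ∃ f ∈ S, o.dir f = (x, y)

lemma ArcIn.mono (h : o.ArcIn S x y) (hST : S ⊆ T) (hagree : ∀ f ∈ S, o'.dir f = o.dir f) :
    o'.ArcIn T x y := by
  obtain ⟨f, hf, hdir⟩ := h
  exact ⟨f, hST hf, (hagree f hf).trans hdir⟩

lemma arcIn_univ_iff [Fintype E] : o.ArcIn Finset.univ x y ↔ o.DAdj x y := by
  simp [ArcIn, DAdj]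

def Returns (o : G.Orientation) (S : Finset E) (n : ℕ) : Prop :=
  ∀ f ∈ S, ChainWithin (o.ArcIn S) n (o.dir f).2 (o.dir f).1

lemma Returns.mono (h : o.Returns S m) (hmn : m ≤ n) : o.Returns S n :=
  fun f hf => (h f hf).mono hmn

lemma Returns.extend (h : o.Returns S n) (hST : S ⊆ T) (hagree : ∀ f ∈ S, o'.dir f = o.dir f)
    (hnew : ∀ f ∈ T, f ∉ S → ChainWithin (o'.ArcIn T) n (o'.dir f).2 (o'.dir f).1) :
    o'.Returns T n := by
  intro f hf
  by_cases hfS : f ∈ S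
  · rw [hagree f hfS]
    exact (h f hfS).mono_rel fun _ _ harc => harc.mono hST hagree
  · exact hnew f hf hfS

lemma Returns.congr (h : o.Returns S n) (hagree : ∀ f ∈ S, o'.dir f = o.dir f) :
    o'.Returns S n :=
  h.extend subset_rfl hagree fun _ hf hfS => absurd hf hfS

lemma Returns.chainWithin (h : o.Returns S (n + 1)) {f : E} (hf : f ∈ S)
    (hends : G.ends f = s(x, y)) : ChainWithin (o.ArcIn S) (n + 1) x y := by
  rcases o.dir_eq_or_eq_swap hends with hdir | hdir
  · exact .single ⟨f, hf, hdir⟩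
  · simpa [hdir] using h f hf

lemma ddist_le_of_chainWithin (h : ChainWithin o.DAdj n x y) : o.ddist x y ≤ n := by
  suffices ∃ l : List V, List.IsChain o.DAdj (x :: l) ∧
      (x :: l).getLast (List.cons_ne_nil x l) = y ∧ l.length ≤ n by
    obtain ⟨l, hc, hl, hlen⟩ := this
    rw [ddist]
    refine (sInf_le ?_).trans (Nat.cast_le.2 hlen)
    exact ⟨l, hc, hl, rfl⟩
  induction h with
  | refl n x => exact ⟨[], .singleton x, rfl, Nat.zero_le n⟩
  | cons hxy _ ih =>
    obtain ⟨l, hc, hl, hlen⟩ := ih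
    exact ⟨_ :: l, .cons_cons hxy hc, by rwa [List.getLast_cons], by simpa using hlen⟩

lemma Returns.ddist_le [Fintype E] (h : o.Returns Finset.univ (n + 1))
    (hconn : G.toSimple.Connected) (x y : V) : o.ddist x y ≤ (G.dist x y * (n + 1) : ℕ) := by
  obtain ⟨p, hp⟩ := hconn.exists_walk_length_eq_dist x y
  rw [dist, ← hp]
  refine ddist_le_of_chainWithin (ChainWithin.of_walk (fun u v huv => ?_) p)
  obtain ⟨-, e, he⟩ := huv
  exact (h.chainWithin (Finset.mem_univ e) he).mono_rel fun _ _ => arcIn_univ_iff.1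

section Construction

variable [DecidableEq E]

lemma Returns.exists_insert_parallel (ho : o.Returns D (n + 1)) {e e' : E} (he' : e' ∉ D)
    (hne : e' ≠ e) (hends : G.ends e' = G.ends e) :
    ∃ o' : G.Orientation, o'.Returns (insert e (insert e' D)) (n + 1) := by
  have hrev : G.ends e' = s((o.dir e).2, (o.dir e).1) :=
    hends.trans ((o.compat e).symm.trans Sym2.eq_swap)
  have hdir : (o.reorient e' _ _ hrev).dir e = o.dir e := o.reorient_dir_of_ne hrev hne.symm
  refine ⟨o.reorient e' _ _ hrev, ho.extend (fun f hf => by simp [hf])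
    (fun f hf => o.reorient_dir_of_ne hrev (ne_of_mem_of_not_mem hf he')) fun f hf hfD => ?_⟩
  obtain rfl | rfl : e = f ∨ e' = f := by simpa [hfD, eq_comm] using hf
  · rw [hdir]
    exact .single ⟨e', by simp, o.reorient_dir_self hrev⟩
  · rw [o.reorient_dir_self hrev]
    exact .single ⟨e, by simp, hdir⟩

lemma Returns.exists_insert_triangle (ho : o.Returns D (n + 2)) {e f g : E} {a b c : V}
    (ht : G.IsTriangle e f g a b c) (he : e ∉ D) (hf : f ∉ D) (hg : g ∉ D) :
    ∃ o' : G.Orientation, o'.Returns (insert e (insert f (insert g D))) (n + 2) := by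
  obtain ⟨hef, heg, hfg, hae, hbf, hcg⟩ := ht
  set o' := ((o.reorient e a b hae).reorient f b c hbf).reorient g c a hcg
  have hdir_e : o'.dir e = (a, b) := by simp [o', reorient_dir_of_ne, hef, heg]
  have hdir_f : o'.dir f = (b, c) := by simp [o', reorient_dir_of_ne, hfg]
  have hdir_g : o'.dir g = (c, a) := by simp [o']
  have hagree : ∀ h ∈ D, o'.dir h = o.dir h := fun h hh => by
    simp [o', reorient_dir_of_ne, ne_of_mem_of_not_mem hh he, ne_of_mem_of_not_mem hh hf,
      ne_of_mem_of_not_mem hh hg]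
  refine ⟨o', ho.extend (fun h hh => by simp [hh]) hagree fun h hh hhD => ?_⟩
  obtain rfl | rfl | rfl : e = h ∨ f = h ∨ g = h := by simpa [hhD, eq_comm] using hh
  · rw [hdir_e]
    exact .cons ⟨f, by simp, hdir_f⟩ (.single ⟨g, by simp, hdir_g⟩)
  · rw [hdir_f]
    exact .cons ⟨g, by simp, hdir_g⟩ (.single ⟨e, by simp, hdir_e⟩)
  · rw [hdir_g]
    exact .cons ⟨e, by simp, hdir_e⟩ (.single ⟨f, by simp, hdir_f⟩)

lemma Returns.insert_of_parallel (hS : o.Returns S (n + 1)) (hD : o.Returns D (n + 1))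
    (hDS : D ⊆ S) {e e' : E} (he' : e' ∈ D) (hends : G.ends e' = G.ends e) :
    o.Returns (insert e S) (n + 1) := by
  refine hS.extend (Finset.subset_insert _ _) (fun _ _ => rfl) fun f hf hfS => ?_
  obtain rfl : f = e := by simpa [hfS] using hf
  refine (hD.chainWithin he' (hends.trans ((o.compat f).symm.trans Sym2.eq_swap))).mono_rel
    fun _ _ harc => harc.mono (hDS.trans (Finset.subset_insert _ _)) fun _ _ => rfl

/-- Whatever the current direction of `g`, the edge `e` can be oriented so that `e`, `g` and a
path along `f` inside `D` (which exists in both directions) form a directed cycle. -/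
lemma Returns.exists_insert_triangle_of_mem (hS : o.Returns S (n + 2))
    (hD : o.Returns D (n + 1)) (hDS : D ⊆ S) {e f g : E} {a b c : V}
    (ht : G.IsTriangle e f g a b c) (hf : f ∈ D) (he : e ∉ S) :
    ∃ o' : G.Orientation, (∀ h ∈ S, o'.dir h = o.dir h) ∧
      o'.Returns (insert e (insert g S)) (n + 2) := by
  obtain ⟨-, heg, -, hae, hbf, hcg⟩ := ht
  have hST : S ⊆ insert e (insert g S) := fun h hh => by simp [hh]
  have hmem : ∀ {h}, h ∈ insert e (insert g S) → h ∉ S → e = h ∨ g = h := fun hh hhS => by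
    simpa [hhS, eq_comm] using hh
  rcases o.dir_eq_or_eq_swap hcg with hgdir | hgdir
  · set o' := o.reorient e a b hae
    have hagree : ∀ h ∈ S, o'.dir h = o.dir h :=
      fun h hh => o.reorient_dir_of_ne hae (ne_of_mem_of_not_mem hh he)
    have hg : o'.dir g = (c, a) := (o.reorient_dir_of_ne hae heg.symm).trans hgdir
    have hbc : ChainWithin (o'.ArcIn (insert e (insert g S))) (n + 1) b c :=
      (hD.chainWithin hf hbf).mono_rel fun _ _ harc =>
        harc.mono (hDS.trans hST) fun h hh => hagree h (hDS hh)
    refine ⟨o', hagree, hS.extend hST hagree fun h hh hhS => ?_⟩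
    rcases hmem hh hhS with rfl | rfl
    · rw [o.reorient_dir_self hae]
      exact hbc.trans (.single (n := 0) ⟨g, by simp, hg⟩)
    · rw [hg]
      exact ((ChainWithin.single (n := 0) ⟨e, by simp, o.reorient_dir_self hae⟩).trans hbc).mono
        (by omega)
  · have hae' := hae.trans Sym2.eq_swap
    set o' := o.reorient e b a hae'
    have hagree : ∀ h ∈ S, o'.dir h = o.dir h :=
      fun h hh => o.reorient_dir_of_ne hae' (ne_of_mem_of_not_mem hh he)
    have hg : o'.dir g = (a, c) := (o.reorient_dir_of_ne hae' heg.symm).trans hgdir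
    have hcb : ChainWithin (o'.ArcIn (insert e (insert g S))) (n + 1) c b :=
      (hD.chainWithin hf (hbf.trans Sym2.eq_swap)).mono_rel fun _ _ harc =>
        harc.mono (hDS.trans hST) fun h hh => hagree h (hDS hh)
    refine ⟨o', hagree, hS.extend hST hagree fun h hh hhS => ?_⟩
    rcases hmem hh hhS with rfl | rfl
    · rw [o.reorient_dir_self hae']
      exact ((ChainWithin.single (n := 0) ⟨g, by simp, hg⟩).trans hcb).mono (by omega)
    · rw [hg]
      exact hcb.trans (.single (n := 0) ⟨e, by simp, o.reorient_dir_self hae'⟩)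

end Construction

end Orientation

lemma exists_returns_two_saturated [Fintype E] (hsc : ∀ e, G.HasShortCycle e) :
    ∃ (D : Finset E) (o : G.Orientation), o.Returns D 2 ∧ ∀ e ∉ D,
      (∃ e' ∈ D, G.ends e' = G.ends e) ∨ ∃ f g a b c, f ∈ D ∧ G.IsTriangle e f g a b c := by
  classical
  obtain ⟨o₀⟩ : Nonempty G.Orientation := inferInstance
  obtain ⟨D, ⟨o, ho⟩, hmax⟩ := (Set.toFinite {D : Finset E | ∃ o : G.Orientation,
    o.Returns D 2}).exists_maximal ⟨∅, o₀, fun f hf => absurd hf (Finset.notMem_empty f)⟩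
  refine ⟨D, o, ho, fun e he => ?_⟩
  have hgrow : ∀ T : Finset E, (∃ o' : G.Orientation, o'.Returns T 2) → D ⊆ T → e ∉ T :=
    fun T hT hDT heT => he (hmax hT hDT heT)
  rcases hsc e with ⟨e', hne, hends⟩ | ⟨f, g, a, b, c, ht⟩
  · by_cases he' : e' ∈ D
    · exact Or.inl ⟨e', he', hends⟩
    · exact absurd (Finset.mem_insert_self _ _) (hgrow _ (ho.exists_insert_parallel he' hne hends)
        fun h hh => by simp [hh])
  · by_cases hf : f ∈ D
    · exact Or.inr ⟨f, g, a, b, c, hf, ht⟩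
    by_cases hg : g ∈ D
    · exact Or.inr ⟨g, f, b, a, c, hg, ht.swap⟩
    exact absurd (Finset.mem_insert_self _ _) (hgrow _ (ho.exists_insert_triangle ht he hf hg)
      fun h hh => by simp [hh])

lemma exists_orientation_returns_three [Fintype E] (hsc : ∀ e, G.HasShortCycle e) :
    ∃ o : G.Orientation, o.Returns Finset.univ 3 := by
  classical
  obtain ⟨D, o₀, hD₀, hcover⟩ := exists_returns_two_saturated hsc
  obtain ⟨S, ⟨o, hDS, hD, hS⟩, hmax⟩ := (Set.toFinite {S : Finset E | ∃ o : G.Orientation,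
    D ⊆ S ∧ o.Returns D 2 ∧ o.Returns S 3}).exists_maximal
    ⟨D, o₀, subset_rfl, hD₀, hD₀.mono (by norm_num)⟩
  suffices S = Finset.univ from ⟨o, this ▸ hS⟩
  refine Finset.eq_univ_of_forall fun e => by_contra fun he => ?_
  have hgrow : ∀ T : Finset E,
      (∃ o' : G.Orientation, D ⊆ T ∧ o'.Returns D 2 ∧ o'.Returns T 3) → S ⊆ T → e ∉ T :=
    fun T hT hST heT => he (hmax hT hST heT)
  rcases hcover e (fun h => he (hDS h)) with ⟨e', he', hends⟩ | ⟨f, g, a, b, c, hf, ht⟩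
  · exact hgrow (insert e S) ⟨o, hDS.trans (Finset.subset_insert _ _), hD,
      hS.insert_of_parallel (hD.mono (by norm_num)) hDS he' hends⟩ (Finset.subset_insert _ _)
      (Finset.mem_insert_self _ _)
  · obtain ⟨o', hagree, ho'⟩ := hS.exists_insert_triangle_of_mem hD hDS ht hf he
    have hST : S ⊆ insert e (insert g S) :=
      (Finset.subset_insert _ _).trans (Finset.subset_insert _ _)
    exact hgrow _ ⟨o', hDS.trans hST, hD.congr fun h hh => hagree h (hDS hh), ho'⟩ hST
      (Finset.mem_insert_self _ _)

end Multigraph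

/-- Let `G` be a finite connected bridgeless graph (parallel edges allowed)
with diameter `d` and maximum edge girth `g*(G) = 3` (i.e. every edge either has a parallel
edge or lies in a triangle). Then `G` admits a strong orientation of diameter at most `3d`. -/
theorem stmt1 {V E : Type*} [Fintype V] [Fintype E] (G : Multigraph V E)
    (hconn : G.toSimple.Connected) (hbridgeless : G.Bridgeless)
    (d : ℕ) (hdiam : G.diam = d)
    (hg : G.maxEdgeGirth = 3) :
    ∃ o : G.Orientation, o.IsStrong ∧ o.odiam ≤ ((3 * d : ℕ) : ℕ∞) := by
  obtain ⟨o, ho⟩ := Multigraph.exists_orientation_returns_three (hbridgeless.hasShortCycle hg)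
  have hle : ∀ x y, o.ddist x y ≤ ((3 * d : ℕ) : ℕ∞) := fun x y =>
    (ho.ddist_le hconn x y).trans (Nat.cast_le.2 (by have := G.dist_le_diam x y; omega))
  exact ⟨o, fun x y => ne_top_of_le_ne_top (ENat.natCast_ne_top _) (hle x y), iSup₂_le hle⟩
end

section
/- Let G be a finite connected bridgeless graph with diameter d(G)=4 and maximum edge girth g*(G)=9. Then G admits a strong orientation whose diameter is at most 12; in particular, the oriented diameter of G is at most 12. -/
/-!
Pick an edge `e₀ = xy` with `l(e₀) = 2d + 1` (here `d = 4`) and let `H = G - e₀`; then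
`dist_H(y, x) = 2d`. Because `G = H + xy` has diameter `d`, every vertex `w` lies on an
`H`-geodesic from `y` to `x`: `dist_H(y, w) + dist_H(w, x) = 2d`. Orient every edge of `H` from
level `i = dist_H(y, ·)` to level `i + 1`, the edge `e₀` from `x` to `y`, and the rest arbitrarily.
If `t` is less than `d` levels above `s`, the route `s ⟶ x → y ⟶ t` climbing the levels has
length at most `3d`. Otherwise a shortest `s`-`z` path in `G`, for `z` on a geodesic from `y` to
`t` exactly `d` levels above `s`, avoids `e₀` and climbs, so `s ⟶ z ⟶ t` has length at most `2d`.
-/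

namespace SimpleGraph

variable {V : Type*} {H : SimpleGraph V}

lemma Connected.exists_dist_eq_of_le_dist (hH : H.Connected) {a b : V} {j : ℕ}
    (hj : j ≤ H.dist a b) : ∃ c, H.dist a c = j ∧ H.dist c b = H.dist a b - j := by
  obtain ⟨p, hp⟩ := (hH a b).exists_walk_length_eq_dist
  have hac : H.dist a (p.getVert j) ≤ j :=
    (dist_le (p.take j)).trans (by simp [Walk.take_length])
  have hcb : H.dist (p.getVert j) b ≤ H.dist a b - j := by
    simpa [Walk.drop_length, hp] using dist_le (p.drop j)
  have := hH.dist_triangle (u := a) (v := p.getVert j) (w := b)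
  exact ⟨p.getVert j, by omega, by omega⟩

lemma Connected.min_le_dist_sup_edge (hH : H.Connected) (x y a b : V) :
    min (H.dist a b) (min (H.dist a x + 1 + H.dist y b) (H.dist a y + 1 + H.dist x b)) ≤
      (H ⊔ edge x y).dist a b := by
  obtain ⟨p, hp⟩ := (hH.mono le_sup_left a b).exists_walk_length_eq_dist
  rw [← hp]
  clear hp
  induction p with
  | nil => simp
  | @cons a c b hac p ih =>
    rw [Walk.length_cons]
    rcases (sup_adj _ _ _ _).mp hac with hac | hac
    · have := dist_eq_one_iff_adj.mpr hac
      have := hH.dist_triangle (u := a) (v := c) (w := b)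
      have := hH.dist_triangle (u := a) (v := c) (w := x)
      have := hH.dist_triangle (u := a) (v := c) (w := y)
      omega
    · obtain ⟨⟨rfl, rfl⟩ | ⟨rfl, rfl⟩, -⟩ := (edge_adj _ _ _ _).mp hac <;>
        simp only [dist_self] at ih ⊢ <;> omega

section Levels

variable {x y : V} {d : ℕ}

lemma dist_add_dist_le_of_dist_lt (hH : H.Connected) (hyx : H.dist y x = 2 * d)
    (hdiam : ∀ a b, (H ⊔ edge x y).dist a b ≤ d) {w : V} (hw : H.dist y w < d) :
    H.dist y w + H.dist w x ≤ 2 * d := by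
  by_contra! hlong
  -- The vertex `c` on a geodesic from `y` to `x` with `dist c x = dist w x - d - 1` would be
  -- farther than `d` from `w` in `H ⊔ edge x y`.
  obtain ⟨c, hyc, hcx⟩ := hH.exists_dist_eq_of_le_dist (a := y) (b := x)
    (j := 3 * d + 1 - H.dist w x) (by omega)
  have hmin := (hH.min_le_dist_sup_edge x y w c).trans (hdiam w c)
  have := hH.dist_triangle (u := w) (v := c) (w := x)
  have := hH.dist_triangle (u := y) (v := x) (w := w)
  rw [dist_comm (u := x) (v := c), dist_comm (u := w) (v := y)] at hmin
  omega

lemma dist_add_dist_eq (hH : H.Connected) (hyx : H.dist y x = 2 * d)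
    (hdiam : ∀ a b, (H ⊔ edge x y).dist a b ≤ d) (w : V) :
    H.dist y w + H.dist w x = 2 * d := by
  have hxy : H.dist x y = 2 * d := by rwa [dist_comm]
  have hdiam' : ∀ a b, (H ⊔ edge y x).dist a b ≤ d := by rwa [edge_comm]
  have := hH.dist_triangle (u := y) (v := w) (w := x)
  have hwy := (hH.min_le_dist_sup_edge x y w y).trans (hdiam w y)
  have hwx := (hH.min_le_dist_sup_edge x y w x).trans (hdiam w x)
  simp only [dist_self, dist_comm (u := w) (v := y), dist_comm (u := y) (v := x)] at hwy hwx
  rcases lt_or_ge (H.dist y w) d with hy | hy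
  · have := dist_add_dist_le_of_dist_lt hH hyx hdiam hy
    omega
  rcases lt_or_ge (H.dist w x) d with hx | hx
  · have := dist_add_dist_le_of_dist_lt hH hxy hdiam' (w := w) (by rwa [dist_comm])
    rw [dist_comm (u := w) (v := y), dist_comm (u := x) (v := w)] at this
    omega
  omega

end Levels

end SimpleGraph

namespace Multigraph

variable {V E : Type*} {G : Multigraph V E}

lemma ne_of_ends_eq {e : E} {a b : V} (he : G.ends e = s(a, b)) : a ≠ b := by
  rintro rfl
  exact G.loopless e (he ▸ Sym2.mk_isDiag_iff.mpr rfl)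

lemma toSimple_eq_deleteEdge_sup_edge {e₀ : E} {x y : V} (he₀ : G.ends e₀ = s(x, y)) :
    G.toSimple = (G.deleteEdge e₀).toSimple ⊔ SimpleGraph.edge x y := by
  ext u v
  simp only [SimpleGraph.sup_adj, SimpleGraph.edge_adj, toSimple, Adjm, deleteEdge]
  constructor
  · rintro ⟨huv, e, he⟩
    by_cases h : e = e₀
    · subst h
      rw [he₀, Sym2.eq_iff] at he
      exact Or.inr ⟨by tauto, huv⟩
    · exact Or.inl ⟨huv, ⟨e, h⟩, he⟩
  · rintro (⟨huv, e, he⟩ | ⟨hxy, huv⟩)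
    · exact ⟨huv, e, he⟩
    · refine ⟨huv, e₀, he₀.trans ?_⟩
      rcases hxy with ⟨rfl, rfl⟩ | ⟨rfl, rfl⟩
      exacts [rfl, Sym2.eq_swap]

namespace Walk

lemma start_mem_support {u v : V} (p : G.Walk u v) : u ∈ p.support := by
  cases p <;> simp [support]

lemma mem_support_of_mem_edges {u v a b : V} {e : E} (p : G.Walk u v) (hm : e ∈ p.edges)
    (he : G.ends e = s(a, b)) : a ∈ p.support := by
  induction p with
  | nil => simp [edges] at hm
  | cons f hf p ih =>
    simp only [edges, List.mem_cons] at hm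
    simp only [support, List.mem_cons]
    rcases hm with rfl | hm
    · rw [hf, Sym2.eq_iff] at he
      rcases he with ⟨rfl, -⟩ | ⟨-, rfl⟩
      exacts [Or.inl rfl, Or.inr p.start_mem_support]
    · exact Or.inr (ih hm)

lemma edges_nodup_of_support_nodup {u v : V} (p : G.Walk u v) (hp : p.support.Nodup) :
    p.edges.Nodup := by
  induction p with
  | nil => simp [edges]
  | cons f hf p ih =>
    simp only [support, List.nodup_cons] at hp
    simp only [edges, List.nodup_cons]
    exact ⟨fun hm => hp.1 (p.mem_support_of_mem_edges hm hf), ih hp.2⟩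

lemma exists_eq_append_of_mem_edges {u v : V} (p : G.Walk u v) {e : E} (hm : e ∈ p.edges) :
    ∃ (a b : V) (q : G.Walk u a) (r : G.Walk b v), G.ends e = s(a, b) ∧
      p.edges = q.edges ++ e :: r.edges ∧ p.length = q.length + r.length + 1 := by
  induction p with
  | nil => simp [edges] at hm
  | cons f hf p ih =>
    simp only [edges, List.mem_cons] at hm
    rcases hm with rfl | hm
    · exact ⟨_, _, .nil, p, hf, rfl, by simp [length]⟩
    · obtain ⟨a, b, q, r, hab, hedges, hlen⟩ := ih hm
      refine ⟨a, b, .cons f hf q, r, hab, by simp [edges, hedges], ?_⟩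
      simp only [length, hlen]
      omega

lemma exists_deleteEdge_walk {e₀ : E} {u v : V} (p : G.Walk u v) (hp : e₀ ∉ p.edges) :
    ∃ q : (G.deleteEdge e₀).toSimple.Walk u v, q.length = p.length := by
  induction p with
  | nil => exact ⟨.nil, rfl⟩
  | cons f hf p ih =>
    simp only [edges, List.mem_cons, not_or] at hp
    obtain ⟨q, hq⟩ := ih hp.2
    have hadj : (G.deleteEdge e₀).toSimple.Adj _ _ := ⟨ne_of_ends_eq hf, ⟨f, Ne.symm hp.1⟩, hf⟩
    exact ⟨.cons hadj q, by rw [SimpleGraph.Walk.length_cons, hq]; rfl⟩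

end Walk

lemma exists_walk_of_deleteEdge_walk {e₀ : E} {u v : V}
    (q : (G.deleteEdge e₀).toSimple.Walk u v) :
    ∃ p : G.Walk u v, p.length = q.length ∧ e₀ ∉ p.edges ∧ p.support = q.support := by
  induction q with
  | nil => exact ⟨.nil, rfl, by simp [Walk.edges], rfl⟩
  | cons h q ih =>
    obtain ⟨⟨f, hf⟩, hfe⟩ := h.2
    obtain ⟨p, hlen, hp, hsupp⟩ := ih
    refine ⟨.cons f hfe p, by simp [Walk.length, hlen], ?_, by simp [Walk.support, hsupp]⟩
    simp only [Walk.edges, List.mem_cons, not_or]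
    exact ⟨Ne.symm hf, hp⟩

lemma edgeGirth_eq_dist_add_one {e₀ : E} {x y : V} (he₀ : G.ends e₀ = s(x, y))
    (hconn : (G.deleteEdge e₀).toSimple.Connected) :
    G.edgeGirth e₀ = (G.deleteEdge e₀).toSimple.dist x y + 1 := by
  obtain ⟨q, hq, hqlen⟩ := hconn.exists_path_of_dist y x
  obtain ⟨p, hplen, hp, hsupp⟩ := exists_walk_of_deleteEdge_walk q
  have hcycle : (Walk.cons e₀ he₀ p).IsCycle := by
    have hnodup : p.support.Nodup := hsupp ▸ hq.support_nodup
    refine ⟨?_, hnodup, by simp [Walk.length]⟩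
    exact List.nodup_cons.mpr ⟨hp, p.edges_nodup_of_support_nodup hnodup⟩
  refine le_antisymm ?_ (le_csInf ⟨_, x, _, hcycle, List.mem_cons_self, rfl⟩ ?_)
  · refine Nat.sInf_le ⟨x, _, hcycle, List.mem_cons_self, ?_⟩
    simp [Walk.length, hplen, hqlen, SimpleGraph.dist_comm]
  rintro _ ⟨v, c, hc, hmem, rfl⟩
  obtain ⟨a, b, q, r, hab, hedges, hlen⟩ := c.exists_eq_append_of_mem_edges hmem
  have hnodup := hc.1
  rw [hedges, List.nodup_append] at hnodup
  obtain ⟨q', hq'⟩ := q.exists_deleteEdge_walk (e₀ := e₀)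
    fun h => hnodup.2.2 _ h _ List.mem_cons_self rfl
  obtain ⟨r', hr'⟩ := r.exists_deleteEdge_walk (List.nodup_cons.mp hnodup.2.1).1
  have hab' : (G.deleteEdge e₀).toSimple.dist a b = (G.deleteEdge e₀).toSimple.dist x y := by
    rw [he₀, Sym2.eq_iff] at hab
    rcases hab with ⟨rfl, rfl⟩ | ⟨rfl, rfl⟩
    exacts [rfl, SimpleGraph.dist_comm]
  have := hconn.dist_triangle (u := a) (v := v) (w := b)
  have hva := SimpleGraph.dist_le q'.reverse
  have hvb := SimpleGraph.dist_le r'.reverse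
  rw [SimpleGraph.Walk.length_reverse] at hva hvb
  omega

namespace Orientation

open Classical in
noncomputable def along (G : Multigraph V E) (P : V → V → Prop) : G.Orientation where
  dir e := if P (G.ends e).out.1 (G.ends e).out.2 then (G.ends e).out else (G.ends e).out.swap
  compat e := by
    split_ifs
    · exact Quot.out_eq _
    · rw [Prod.fst_swap, Prod.snd_swap, Sym2.eq_swap]
      exact Quot.out_eq _

lemma dAdj_along {P : V → V → Prop} {e : E} {a b : V} (he : G.ends e = s(a, b))
    (hab : P a b) (hba : ¬ P b a) : (along G P).DAdj a b := by
  refine ⟨e, ?_⟩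
  have hout : s((G.ends e).out.1, (G.ends e).out.2) = s(a, b) := by
    rw [← he]; exact Quot.out_eq _
  simp only [along]
  rcases Sym2.eq_iff.mp hout with ⟨h₁, h₂⟩ | ⟨h₁, h₂⟩
  · rw [if_pos (by rwa [h₁, h₂])]
    exact Prod.ext h₁ h₂
  · rw [if_neg (by rwa [h₁, h₂])]
    exact Prod.ext h₂ h₁

variable {o : G.Orientation}

lemma ddist_le_iff {x y : V} {n : ℕ} : o.ddist x y ≤ n ↔ ∃ l : List V,
    List.IsChain o.DAdj (x :: l) ∧ (x :: l).getLast (List.cons_ne_nil x l) = y ∧ l.length ≤ n := by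
  constructor
  · intro h
    obtain ⟨_, ⟨l, hl, hlast, rfl⟩, hlt⟩ :=
      sInf_lt_iff.mp (h.trans_lt (ENat.natCast_lt_natCast.mpr n.lt_succ_self))
    exact ⟨l, hl, hlast, Nat.lt_succ_iff.mp (ENat.natCast_lt_natCast.mp hlt)⟩
  · rintro ⟨l, hl, hlast, hlen⟩
    exact (sInf_le ⟨l, hl, hlast, rfl⟩ : o.ddist x y ≤ l.length).trans
      (ENat.natCast_le_natCast.mpr hlen)

lemma ddist_self (x : V) : o.ddist x x = 0 := by
  simpa using ddist_le_iff (n := 0) |>.mpr ⟨[], List.IsChain.singleton x, rfl, le_rfl⟩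

lemma ddist_le_succ_of_dAdj {x y z : V} {n : ℕ} (hxy : o.DAdj x y) (hyz : o.ddist y z ≤ n) :
    o.ddist x z ≤ (n + 1 : ℕ) := by
  obtain ⟨l, hl, hlast, hlen⟩ := ddist_le_iff.mp hyz
  exact ddist_le_iff.mpr ⟨y :: l, List.isChain_cons_cons.mpr ⟨hxy, hl⟩,
    by rwa [List.getLast_cons (List.cons_ne_nil y l)], by simpa using hlen⟩

lemma ddist_le_add {x y z : V} {m n : ℕ} (hxy : o.ddist x y ≤ m) (hyz : o.ddist y z ≤ n) :
    o.ddist x z ≤ (m + n : ℕ) := by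
  obtain ⟨l, hl, hlast, hlen⟩ := ddist_le_iff.mp hxy
  clear hxy
  induction l generalizing x m with
  | nil =>
    obtain rfl : x = y := hlast
    exact hyz.trans (ENat.natCast_le_natCast.mpr (Nat.le_add_left n m))
  | cons a l ih =>
    obtain ⟨hxa, hl⟩ := List.isChain_cons_cons.mp hl
    rw [List.getLast_cons (List.cons_ne_nil a l)] at hlast
    rw [List.length_cons] at hlen
    exact (ddist_le_succ_of_dAdj hxa (ih hl hlast le_rfl)).trans
      (ENat.natCast_le_natCast.mpr (by omega))

variable {H : SimpleGraph V} {x y : V} {d : ℕ}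

lemma ddist_le_dist_of_dist_eq_add (hH : H.Connected)
    (harc : ∀ u v, H.Adj u v → H.dist y v = H.dist y u + 1 → o.DAdj u v) {a b : V}
    (hab : H.dist y b = H.dist y a + H.dist a b) : o.ddist a b ≤ H.dist a b := by
  obtain ⟨p, hp⟩ := (hH a b).exists_walk_length_eq_dist
  rw [← hp] at hab ⊢
  clear hp
  induction p with
  | nil => exact (ddist_self _).trans_le zero_le
  | @cons a c b hac p ih =>
    rw [SimpleGraph.Walk.length_cons] at hab ⊢
    have := hH.dist_triangle (u := y) (v := a) (w := c)
    have := hH.dist_triangle (u := y) (v := c) (w := b)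
    have := SimpleGraph.dist_eq_one_iff_adj.mpr hac
    have := SimpleGraph.dist_le p
    exact ddist_le_succ_of_dAdj (harc a c hac (by omega)) (ih (by omega))

theorem ddist_le_three_mul (hH : H.Connected) (hyx : H.dist y x = 2 * d)
    (hdiam : ∀ a b, (H ⊔ SimpleGraph.edge x y).dist a b ≤ d)
    (harc : ∀ u v, H.Adj u v → H.dist y v = H.dist y u + 1 → o.DAdj u v)
    (hxy : o.DAdj x y) (s t : V) : o.ddist s t ≤ (3 * d : ℕ) := by
  have hlevel := SimpleGraph.dist_add_dist_eq hH hyx hdiam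
  have climb (a b : V) := ddist_le_dist_of_dist_eq_add (o := o) hH harc (a := a) (b := b)
  have hs := hlevel s
  have ht := hlevel t
  rcases lt_or_ge (H.dist y t) (H.dist y s + d) with hst | hst
  · have hsx := climb s x (by omega)
    have hyt := climb y t (by rw [SimpleGraph.dist_self]; omega)
    have hst := ddist_le_add (ddist_le_add hsx (ddist_le_succ_of_dAdj hxy (ddist_self y).le)) hyt
    exact hst.trans (ENat.natCast_le_natCast.mpr (by omega))
  · obtain ⟨z, hyz, hzt⟩ := hH.exists_dist_eq_of_le_dist (a := y) (b := t) hst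
    have hz := hlevel z
    have hsz : H.dist s z = d := by
      have hmin := (hH.min_le_dist_sup_edge x y s z).trans (hdiam s z)
      have := hH.dist_triangle (u := y) (v := s) (w := z)
      simp only [SimpleGraph.dist_comm (u := s) (v := y),
        SimpleGraph.dist_comm (u := x) (v := z)] at hmin
      omega
    have hst := ddist_le_add (climb s z (by omega)) (climb z t (by omega))
    exact hst.trans (ENat.natCast_le_natCast.mpr (by omega))

end Orientation

theorem exists_isStrong_odiam_le_three_mul {d : ℕ} {e₀ : E}
    (hconn : (G.deleteEdge e₀).toSimple.Connected) (hgirth : G.edgeGirth e₀ = 2 * d + 1)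
    (hdist : ∀ a b, G.dist a b ≤ d) :
    ∃ o : G.Orientation, o.IsStrong ∧ o.odiam ≤ (3 * d : ℕ) := by
  obtain ⟨x, y, he₀⟩ : ∃ x y, G.ends e₀ = s(x, y) := ⟨_, _, (Quot.out_eq _).symm⟩
  have hyx := edgeGirth_eq_dist_add_one he₀ hconn
  rw [hgirth, add_left_inj, SimpleGraph.dist_comm, eq_comm] at hyx
  set H := (G.deleteEdge e₀).toSimple
  have hdiam : ∀ a b, (H ⊔ SimpleGraph.edge x y).dist a b ≤ d := by
    rw [← toSimple_eq_deleteEdge_sup_edge he₀]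
    exact hdist
  have hyy : H.dist y y = 0 := SimpleGraph.dist_self
  let o := Orientation.along G fun u v => H.dist y v = H.dist y u + 1 ∨ (u = x ∧ v = y)
  have harc (u v : V) (huv : H.Adj u v) (hup : H.dist y v = H.dist y u + 1) : o.DAdj u v := by
    obtain ⟨-, e, he⟩ := huv
    refine Orientation.dAdj_along (e := e.1) he (Or.inl hup) ?_
    rintro (h | ⟨rfl, rfl⟩) <;> omega
  have hxy : o.DAdj x y := by
    refine Orientation.dAdj_along he₀ (Or.inr ⟨rfl, rfl⟩) ?_
    rintro (h | ⟨rfl, -⟩)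
    exacts [by omega, ne_of_ends_eq he₀ rfl]
  have hbound := Orientation.ddist_le_three_mul hconn hyx hdiam harc hxy
  exact ⟨o, fun s t => ne_top_of_le_ne_top (ENat.natCast_ne_top _) (hbound s t), iSup₂_le hbound⟩

lemma dist_le_diam_s2 (h : G.diam ≠ 0) (a b : V) : G.dist a b ≤ G.diam := by
  have hbdd : BddAbove {n | ∃ x y, G.dist x y = n} := by
    by_contra hb
    exact h (Nat.sSup_of_not_bddAbove hb)
  exact le_csSup hbdd ⟨a, b, rfl⟩

lemma exists_edgeGirth_eq_maxEdgeGirth (h : G.maxEdgeGirth ≠ 0) :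
    ∃ e, G.edgeGirth e = G.maxEdgeGirth := by
  have hne : (Set.range G.edgeGirth).Nonempty := by
    by_contra hemp
    rw [Set.not_nonempty_iff_eq_empty] at hemp
    exact h (by rw [maxEdgeGirth, hemp, csSup_empty]; rfl)
  have hbdd : BddAbove (Set.range G.edgeGirth) := by
    by_contra hb
    exact h (Nat.sSup_of_not_bddAbove hb)
  exact Nat.sSup_mem hne hbdd

end Multigraph

theorem stmt2_general {V E : Type*} (G : Multigraph V E)
    (hbridgeless : G.Bridgeless)
    (hdiam : G.diam = 4) (hg : G.maxEdgeGirth = 9) :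
    ∃ o : G.Orientation, o.IsStrong ∧ o.odiam ≤ (12 : ℕ∞) := by
  obtain ⟨e₀, he₀⟩ := G.exists_edgeGirth_eq_maxEdgeGirth (by omega)
  have hdist (a b : V) : G.dist a b ≤ 4 := hdiam ▸ G.dist_le_diam_s2 (by omega) a b
  obtain ⟨o, hstrong, hodiam⟩ :=
    G.exists_isStrong_odiam_le_three_mul (d := 4) (hbridgeless e₀) (by omega) hdist
  exact ⟨o, hstrong, hodiam.trans_eq rfl⟩

/-- Let `G` be a finite connected bridgeless graph with diameter `4` and
maximum edge girth `g*(G) = 9`. Then `G` admits a strong orientation whose diameter is at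
most `12`; in particular the oriented diameter of `G` is at most `12`. -/
theorem stmt2 {V E : Type*} [Fintype V] [Fintype E] (G : Multigraph V E)
    (hconn : G.toSimple.Connected) (hbridgeless : G.Bridgeless)
    (hdiam : G.diam = 4) (hg : G.maxEdgeGirth = 9) :
    ∃ o : G.Orientation, o.IsStrong ∧ o.odiam ≤ (12 : ℕ∞) :=
  stmt2_general G hbridgeless hdiam hg
end

section
/- In an R-S orientation of a graph G, every vertex w ∈ S satisfies θ(w,R) ≤ 2; that is, there is a directed path of length at most 2 from w to some vertex of R, and a directed path of length at most 2 from some vertex of R to w. -/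
/-- The arcs of an `R`-`S` orientation: an edge of `G` is oriented from `x` to `y`
precisely when it goes from `R` to `V₁`, from `V₁` to `V₂`, or from `V₂` to `R`. -/
def RSArc {V : Type*} (G : SimpleGraph V) (R V1 V2 : Set V) (x y : V) : Prop :=
  G.Adj x y ∧ ((x ∈ R ∧ y ∈ V1) ∨ (x ∈ V1 ∧ y ∈ V2) ∨ (x ∈ V2 ∧ y ∈ R))

/-- In an `R`-`S` orientation of a graph `G`, every vertex `w ∈ S`
satisfies `θ(w, R) ≤ 2`: there is a directed path of length at most `2` from `w` to some
vertex of `R`, and a directed path of length at most `2` from some vertex of `R` to `w`. -/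
theorem stmt6 {V : Type*} (G : SimpleGraph V) (R S : Set V)
    (hdisj : Disjoint R S)
    (hRS : ∀ w ∈ S, ∃ r ∈ R, G.Adj w r)
    (hSnoiso : ∀ w ∈ S, ∃ w' ∈ S, G.Adj w w')
    (F : SimpleGraph V) (hFle : F ≤ G)
    (hFS : ∀ ⦃x y : V⦄, F.Adj x y → x ∈ S ∧ y ∈ S)
    (hFforest : F.IsAcyclic)
    (V1 V2 : Set V) (hV12 : V1 ∪ V2 = S) (hV12disj : Disjoint V1 V2)
    (hbip : ∀ ⦃x y : V⦄, F.Adj x y → (x ∈ V1 ∧ y ∈ V2) ∨ (x ∈ V2 ∧ y ∈ V1))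
    (hFnoiso : ∀ w ∈ S, ∃ w', F.Adj w w') :
    ∀ w ∈ S,
      (∃ r ∈ R, RSArc G R V1 V2 w r ∨ ∃ z, RSArc G R V1 V2 w z ∧ RSArc G R V1 V2 z r) ∧
      (∃ r ∈ R, RSArc G R V1 V2 r w ∨ ∃ z, RSArc G R V1 V2 r z ∧ RSArc G R V1 V2 z w) := by
  intro w hw
  obtain ⟨w', hww'⟩ := hFnoiso w hw
  have hw'S : w' ∈ S := (hFS hww').2
  obtain ⟨r, hr, hwr⟩ := hRS w hw
  obtain ⟨r', hr', hw'r'⟩ := hRS w' hw'S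
  have hGww' : G.Adj w w' := hFle hww'
  rcases hbip hww' with ⟨h1, h2⟩ | ⟨h1, h2⟩
  · exact ⟨⟨r', hr', Or.inr ⟨w', ⟨hGww', Or.inr (Or.inl ⟨h1, h2⟩)⟩,
      ⟨hw'r', Or.inr (Or.inr ⟨h2, hr'⟩)⟩⟩⟩,
      ⟨r, hr, Or.inl ⟨hwr.symm, Or.inl ⟨hr, h1⟩⟩⟩⟩
  · exact ⟨⟨r, hr, Or.inl ⟨hwr, Or.inr (Or.inr ⟨h1, hr⟩)⟩⟩,
      ⟨r', hr', Or.inr ⟨w', ⟨hw'r'.symm, Or.inl ⟨hr', h2⟩⟩,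
        ⟨hGww'.symm, Or.inr (Or.inl ⟨h2, h1⟩)⟩⟩⟩⟩
end

section
/- Let G be a bridgeless graph with d(G)=4 and let uv be an edge with l_G(uv) = g*(G) ≥ 6. Then every vertex w ∈ M' has exactly one neighbor in S_{3,3}, i.e. |N(w) ∩ S_{3,3}| = 1. -/
namespace Multigraph

variable {V E : Type*}

/-- `S G u v i j` is the set of vertices at distance `i` from `u` and `j` from `v`. -/
noncomputable def S (G : Multigraph V E) (u v : V) (i j : ℕ) : Set V :=
  {w | G.dist w u = i ∧ G.dist w v = j}

/-- The neighbourhood of a vertex. -/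
def nbhd (G : Multigraph V E) (w : V) : Set V := {x | G.Adjm w x}

end Multigraph

namespace Multigraph

variable {V E : Type*} (G : Multigraph V E) (u v : V)

/-- `A' = {w ∈ S₁₂ : N(w) ⊆ S₁₂ ∪ {u}}`. -/
noncomputable def setA' : Set V := {w ∈ G.S u v 1 2 | G.nbhd w ⊆ G.S u v 1 2 ∪ {u}}
/-- `A = S₁₂ − A'`. -/
noncomputable def setA : Set V := G.S u v 1 2 \ G.setA' u v
/-- `B' = {w ∈ S₂₁ : N(w) ⊆ S₂₁ ∪ {v}}`. -/
noncomputable def setB' : Set V := {w ∈ G.S u v 2 1 | G.nbhd w ⊆ G.S u v 2 1 ∪ {v}}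
/-- `B = S₂₁ − B'`. -/
noncomputable def setB : Set V := G.S u v 2 1 \ G.setB' u v
/-- `I' = {w ∈ S₂₃ : N(w) ⊆ S₂₃ ∪ A}`. -/
noncomputable def setI' : Set V := {w ∈ G.S u v 2 3 | G.nbhd w ⊆ G.S u v 2 3 ∪ G.setA u v}
/-- `I = S₂₃ − I'`. -/
noncomputable def setI : Set V := G.S u v 2 3 \ G.setI' u v
/-- `J' = {w ∈ S₃₂ : N(w) ⊆ S₃₂ ∪ B}`. -/
noncomputable def setJ' : Set V := {w ∈ G.S u v 3 2 | G.nbhd w ⊆ G.S u v 3 2 ∪ G.setB u v}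
/-- `J = S₃₂ − J'`. -/
noncomputable def setJ : Set V := G.S u v 3 2 \ G.setJ' u v
/-- `K' = {w ∈ S₃₄ : N(w) ⊆ S₃₄ ∪ I}`. -/
noncomputable def setK' : Set V := {w ∈ G.S u v 3 4 | G.nbhd w ⊆ G.S u v 3 4 ∪ G.setI u v}
/-- `K = S₃₄ − K'`. -/
noncomputable def setK : Set V := G.S u v 3 4 \ G.setK' u v
/-- `L' = {w ∈ S₄₃ : N(w) ⊆ S₄₃ ∪ J}`. -/
noncomputable def setL' : Set V := {w ∈ G.S u v 4 3 | G.nbhd w ⊆ G.S u v 4 3 ∪ G.setJ u v}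
/-- `L = S₄₃ − L'`. -/
noncomputable def setL : Set V := G.S u v 4 3 \ G.setL' u v
/-- `M' = {w ∈ S₄₄ : exactly one edge of G joins w to S₃₃ ∪ K ∪ L}`. -/
noncomputable def setM' : Set V :=
  {w ∈ G.S u v 4 4 |
    ∃! e : E, ∃ x ∈ G.S u v 3 3 ∪ G.setK u v ∪ G.setL u v, G.ends e = s(w, x)}
/-- `M = S₄₄ − M'`. -/
noncomputable def setM : Set V := G.S u v 4 4 \ G.setM' u v

end Multigraph

namespace SimpleGraph

variable {V : Type*} {G : SimpleGraph V} {u v : V} {n : ℕ}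

lemma exists_adj_dist_eq_of_dist_eq_succ (h : G.dist u v = n + 1) :
    ∃ w, G.Adj u w ∧ G.dist w v = n := by
  obtain ⟨p, hp⟩ := exists_walk_of_dist_ne_zero (by omega : G.dist u v ≠ 0)
  rw [h] at hp
  cases p with
  | nil => simp at hp
  | @cons _ w _ hadj q =>
    refine ⟨w, hadj, le_antisymm ?_ ?_⟩
    · have := dist_le q
      simp only [Walk.length_cons] at hp
      omega
    · have := q.reachable.dist_triangle_right u
      rw [dist_eq_one_iff_adj.mpr hadj] at this
      omega

end SimpleGraph

namespace Multigraph

variable {V E : Type*} {G : Multigraph V E} {u v w x y : V}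

lemma Adjm.symm (h : G.Adjm x y) : G.Adjm y x :=
  let ⟨e, he⟩ := h
  ⟨e, he.trans Sym2.eq_swap⟩

lemma Adjm.toSimple_adj (h : G.Adjm x y) : G.toSimple.Adj x y := by
  refine ⟨?_, h⟩
  rintro rfl
  obtain ⟨e, he⟩ := h
  exact G.loopless e (he ▸ Sym2.mk_isDiag_iff.mpr rfl)

lemma dist_comm (x y : V) : G.dist x y = G.dist y x :=
  SimpleGraph.dist_comm

lemma Adjm.dist_le_succ (h : G.Adjm x y) (t : V) : G.dist x t ≤ G.dist y t + 1 := by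
  have := h.symm.toSimple_adj.diff_dist_adj (u := t)
  rw [← dist, ← dist, dist_comm t, dist_comm t] at this
  omega

lemma exists_adjm_dist_eq_of_dist_eq_succ {n : ℕ} (h : G.dist x y = n + 1) :
    ∃ z, G.Adjm x z ∧ G.dist z y = n :=
  let ⟨z, hadj, hz⟩ := SimpleGraph.exists_adj_dist_eq_of_dist_eq_succ h
  ⟨z, hadj.2, hz⟩

lemma mem_setK_of_adjm (hwx : G.Adjm w x) (hw : 4 ≤ G.dist w u) (hx : x ∈ G.S u v 3 4) :
    x ∈ G.setK u v := by
  refine ⟨hx, fun hx' => ?_⟩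
  rcases hx'.2 hwx.symm with h | h
  · exact absurd h.1 (by omega)
  · exact absurd h.1.1 (by omega)

lemma mem_setL_of_adjm (hwy : G.Adjm w y) (hw : 4 ≤ G.dist w v) (hy : y ∈ G.S u v 4 3) :
    y ∈ G.setL u v := by
  refine ⟨hy, fun hy' => ?_⟩
  rcases hy'.2 hwy.symm with h | h
  · exact absurd h.2 (by omega)
  · exact absurd h.1.2 (by omega)

lemma eq_of_adjm_of_mem_setM' (hw : w ∈ G.setM' u v) (hwx : G.Adjm w x) (hwy : G.Adjm w y)
    (hx : x ∈ G.S u v 3 3 ∪ G.setK u v ∪ G.setL u v)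
    (hy : y ∈ G.S u v 3 3 ∪ G.setK u v ∪ G.setL u v) : x = y := by
  obtain ⟨ex, hex⟩ := hwx
  obtain ⟨ey, hey⟩ := hwy
  have hexy : ex = ey := hw.2.unique ⟨x, hx, hex⟩ ⟨y, hy, hey⟩
  exact Sym2.congr_right.mp (hex.symm.trans (hexy ▸ hey))

lemma exists_adjm_mem_S_three_three (huv : G.Adjm u v) (hw : w ∈ G.setM' u v) :
    ∃ z, G.Adjm w z ∧ z ∈ G.S u v 3 3 := by
  obtain ⟨hwu, hwv⟩ := hw.1
  obtain ⟨x, hwx, hxu⟩ := exists_adjm_dist_eq_of_dist_eq_succ (n := 3) hwu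
  obtain ⟨y, hwy, hyv⟩ := exists_adjm_dist_eq_of_dist_eq_succ (n := 3) hwv
  have hxv : G.dist x v = 3 ∨ G.dist x v = 4 := by
    have := hwx.dist_le_succ v
    have := huv.symm.dist_le_succ x
    rw [dist_comm v, dist_comm u] at this
    omega
  have hyu : G.dist y u = 3 ∨ G.dist y u = 4 := by
    have := hwy.dist_le_succ u
    have := huv.dist_le_succ y
    rw [dist_comm u, dist_comm v] at this
    omega
  rcases hxv with hxv | hxv
  · exact ⟨x, hwx, hxu, hxv⟩
  rcases hyu with hyu | hyu
  · exact ⟨y, hwy, hyu, hyv⟩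
  have hxK := mem_setK_of_adjm hwx hwu.ge ⟨hxu, hxv⟩
  have hyL := mem_setL_of_adjm hwy hwv.ge ⟨hyu, hyv⟩
  have hxy := eq_of_adjm_of_mem_setM' hw hwx hwy (.inl (.inr hxK)) (.inr hyL)
  subst hxy
  omega

end Multigraph

theorem stmt13_general {V E : Type*} (G : Multigraph V E)
    (u v : V) (e : E) (he : G.ends e = s(u, v)) :
    ∀ w ∈ G.setM' u v, (G.nbhd w ∩ G.S u v 3 3).encard = 1 := by
  intro w hw
  obtain ⟨z, hwz, hz⟩ := Multigraph.exists_adjm_mem_S_three_three ⟨e, he⟩ hw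
  refine Set.encard_eq_one.mpr ⟨z, Set.eq_singleton_iff_unique_mem.mpr ⟨⟨hwz, hz⟩, ?_⟩⟩
  rintro z' ⟨hwz', hz'⟩
  exact Multigraph.eq_of_adjm_of_mem_setM' hw hwz' hwz (.inl (.inl hz')) (.inl (.inl hz))

/-- Let `G` be a bridgeless graph with `d(G) = 4` and let `uv` be an edge
with `l_G(uv) = g*(G) ≥ 6`. Then every vertex `w ∈ M'` has exactly one neighbour in `S₃₃`,
i.e. `|N(w) ∩ S₃₃| = 1`. -/
theorem stmt13 {V E : Type*} [Fintype V] [Fintype E] (G : Multigraph V E)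
    (hconn : G.toSimple.Connected) (hbridgeless : G.Bridgeless) (hdiam : G.diam = 4)
    (u v : V) (e : E) (he : G.ends e = s(u, v))
    (hmax : G.edgeGirth e = G.maxEdgeGirth) (h6 : 6 ≤ G.maxEdgeGirth) :
    ∀ w ∈ G.setM' u v, (G.nbhd w ∩ G.S u v 3 3).encard = 1 :=
  stmt13_general G u v e he
end
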